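/- Let R ≥ 1 and S ≥ 1 be integers and v_max > 0, set ρ_r = (r/R)·v_max for 1 ≤ r ≤ R, θ_s = (s/S)·(π/2) for 1 ≤ s ≤ 4S, and a² = v_max²·(R+1)·(2R+1)/(12·R²). For real numbers u, Fx, Fy, define the discrete Maxwellian M_{(r,s)} = u + (ρ_r cos θ_s)·Fx/a² + (ρ_r sin θ_s)·Fy/a². Then the compatibility conditions hold: (1/(4RS))·Σ_{r=1}^{R} Σ_{s=1}^{4S} M_{(r,s)} = u, (1/(4RS))·Σ_{r=1}^{R} Σ_{s=1}^{4S} (ρ_r cos θ_s)·M_{(r,s)} = Fx, and (1/(4RS))·Σ_{r=1}^{R} Σ_{s=1}^{4S} (ρ_r sin θ_s)·M_{(r,s)} = Fy. -/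
import Mathlib
open Real

lemma geom_icc {z : ℂ} {N : ℕ} (hz : z ≠ 1) (hN : z ^ N = 1) :
    ∑ s ∈ Finset.Icc 1 N, z ^ s = 0 := by
  have key : Finset.Icc 1 N = Finset.Ico 1 (N+1) := by
    rw [Finset.Ico_add_one_right_eq_Icc]
  rw [key, geom_sum_Ico hz (by omega), pow_succ, hN]
  simp

lemma trig_sum (c : ℝ) (hc0 : 0 < c) (hc2 : c < 2*π) (N : ℕ) (k : ℤ)
    (hN : (N:ℝ) * c = k * (2*π)) :
    (∑ s ∈ Finset.Icc 1 N, Real.cos ((s:ℝ)*c) = 0) ∧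
    (∑ s ∈ Finset.Icc 1 N, Real.sin ((s:ℝ)*c) = 0) := by
  set z : ℂ := Complex.exp (c * Complex.I) with hzdef
  have hzpow : ∀ s : ℕ, z ^ s = Complex.exp (((s:ℝ)*c : ℝ) * Complex.I) := by
    intro s
    rw [hzdef, ← Complex.exp_nat_mul]
    push_cast
    ring_nf
  have hz1 : z ≠ 1 := by
    rw [hzdef, Ne, Complex.exp_eq_one_iff]
    rintro ⟨n, hn⟩
    have him : c = (n:ℝ) * (2*π) := by
      have := congrArg Complex.im hn
      simpa using this
    have hπ := Real.pi_pos
    rcases le_or_gt n 0 with h | h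
    · have : (n:ℝ) ≤ 0 := by exact_mod_cast h
      nlinarith
    · have : (1:ℝ) ≤ (n:ℝ) := by exact_mod_cast h
      nlinarith
  have hzN : z ^ N = 1 := by
    have hcast : (((N:ℝ) * c : ℝ) : ℂ) * Complex.I = (k:ℂ) * (2*(π:ℂ)*Complex.I) := by
      rw [hN]; push_cast; ring
    rw [hzpow N, hcast, Complex.exp_int_mul_two_pi_mul_I]
  have hsum := geom_icc hz1 hzN
  constructor
  · have : ∑ s ∈ Finset.Icc 1 N, Real.cos ((s:ℝ)*c) = (∑ s ∈ Finset.Icc 1 N, z^s).re := by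
      rw [Complex.re_sum]
      exact Finset.sum_congr rfl fun s _ => by
        rw [hzpow, Complex.exp_ofReal_mul_I_re]
    rw [this, hsum]; simp
  · have : ∑ s ∈ Finset.Icc 1 N, Real.sin ((s:ℝ)*c) = (∑ s ∈ Finset.Icc 1 N, z^s).im := by
      rw [Complex.im_sum]
      exact Finset.sum_congr rfl fun s _ => by
        rw [hzpow, Complex.exp_ofReal_mul_I_im]
    rw [this, hsum]; simp

lemma sq_sum (R : ℕ) : ∑ r ∈ Finset.Icc 1 R, (r:ℝ)^2 = R*(R+1)*(2*R+1)/6 := by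
  induction R with
  | zero => simp
  | succ n ih =>
    rw [Finset.sum_Icc_succ_top (by omega), ih]
    push_cast
    ring

/-- Compatibility conditions for the two-dimensional discrete Maxwellian of
the orthogonal-velocities method: its zeroth moment equals `u` and its first
moments equal the fluxes `Fx` and `Fy`. -/
theorem orthogonal_velocities_maxwellian_compatibility
    (R S : ℕ) (hR : 1 ≤ R) (hS : 1 ≤ S) (vmax : ℝ) (hvmax : 0 < vmax)
    (a2 : ℝ) (ha2 : a2 = vmax ^ 2 * ((R : ℝ) + 1) * (2 * (R : ℝ) + 1) / (12 * (R : ℝ) ^ 2))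
    (u Fx Fy : ℝ)
    (M : ℕ → ℕ → ℝ)
    (hM : ∀ r s, M r s = u
      + ((r : ℝ) / (R : ℝ) * vmax) * Real.cos ((s : ℝ) / (S : ℝ) * (π / 2)) * Fx / a2
      + ((r : ℝ) / (R : ℝ) * vmax) * Real.sin ((s : ℝ) / (S : ℝ) * (π / 2)) * Fy / a2) :
    ((1 / (4 * (R : ℝ) * (S : ℝ))) *
        ∑ r ∈ Finset.Icc 1 R, ∑ s ∈ Finset.Icc 1 (4 * S), M r s = u) ∧
    ((1 / (4 * (R : ℝ) * (S : ℝ))) *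
        ∑ r ∈ Finset.Icc 1 R, ∑ s ∈ Finset.Icc 1 (4 * S),
          ((r : ℝ) / (R : ℝ) * vmax) * Real.cos ((s : ℝ) / (S : ℝ) * (π / 2)) * M r s = Fx) ∧
    ((1 / (4 * (R : ℝ) * (S : ℝ))) *
        ∑ r ∈ Finset.Icc 1 R, ∑ s ∈ Finset.Icc 1 (4 * S),
          ((r : ℝ) / (R : ℝ) * vmax) * Real.sin ((s : ℝ) / (S : ℝ) * (π / 2)) * M r s = Fy) := by
  have hπ := Real.pi_pos
  have hS1 : (1:ℝ) ≤ (S:ℝ) := by exact_mod_cast hS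
  have hS0 : (0:ℝ) < (S:ℝ) := by exact_mod_cast hS
  have hR0 : (0:ℝ) < (R:ℝ) := by exact_mod_cast hR
  have ha2pos : 0 < a2 := by
    rw [ha2]
    apply div_pos (by nlinarith) (by nlinarith)
  have hθ : ∀ s : ℕ, (s:ℝ)/(S:ℝ)*(π/2) = (s:ℝ)*(π/(2*(S:ℝ))) := by
    intro s; field_simp
  obtain ⟨hc1cos, hc1sin⟩ := trig_sum (π/(2*(S:ℝ)))
    (by positivity) (by rw [div_lt_iff₀ (by nlinarith)]; nlinarith) (4*S) 1
    (by push_cast; field_simp; ring)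
  obtain ⟨hc2cos, hc2sin⟩ := trig_sum (π/(S:ℝ))
    (by positivity) (by rw [div_lt_iff₀ hS0]; nlinarith) (4*S) 2
    (by push_cast; field_simp; ring)
  have hcard : (Finset.Icc 1 (4*S)).card = 4*S := by rw [Nat.card_Icc]; omega
  have hdouble : ∀ s : ℕ, (s:ℝ)*(π/(S:ℝ)) = 2*((s:ℝ)*(π/(2*(S:ℝ)))) := by
    intro s; field_simp
  have hcos2 : ∑ s ∈ Finset.Icc 1 (4*S), Real.cos ((s:ℝ)*(π/(2*(S:ℝ))))^2 = 2*(S:ℝ) := by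
    have hh : ∀ s ∈ Finset.Icc 1 (4*S), Real.cos ((s:ℝ)*(π/(2*(S:ℝ))))^2
        = 1/2 + Real.cos ((s:ℝ)*(π/(S:ℝ)))/2 := by
      intro s _
      rw [Real.cos_sq, hdouble s]
    rw [Finset.sum_congr rfl hh, Finset.sum_add_distrib, Finset.sum_const, hcard,
      ← Finset.sum_div, hc2cos]
    push_cast; simp [nsmul_eq_mul]; ring
  have hsin2 : ∑ s ∈ Finset.Icc 1 (4*S), Real.sin ((s:ℝ)*(π/(2*(S:ℝ))))^2 = 2*(S:ℝ) := by
    have hh : ∀ s ∈ Finset.Icc 1 (4*S), Real.sin ((s:ℝ)*(π/(2*(S:ℝ))))^2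
        = 1 - Real.cos ((s:ℝ)*(π/(2*(S:ℝ))))^2 := by
      intro s _; rw [Real.sin_sq]
    rw [Finset.sum_congr rfl hh, Finset.sum_sub_distrib, Finset.sum_const, hcard, hcos2]
    push_cast; simp [nsmul_eq_mul]; ring
  have hcs : ∑ s ∈ Finset.Icc 1 (4*S),
      Real.cos ((s:ℝ)*(π/(2*(S:ℝ)))) * Real.sin ((s:ℝ)*(π/(2*(S:ℝ)))) = 0 := by
    have hh : ∀ s ∈ Finset.Icc 1 (4*S),
        Real.cos ((s:ℝ)*(π/(2*(S:ℝ)))) * Real.sin ((s:ℝ)*(π/(2*(S:ℝ))))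
        = Real.sin ((s:ℝ)*(π/(S:ℝ)))/2 := by
      intro s _
      rw [hdouble s, Real.sin_two_mul]; ring
    rw [Finset.sum_congr rfl hh, ← Finset.sum_div, hc2sin]
    simp
  have hA : ∑ r ∈ Finset.Icc 1 R, ((r:ℝ)/(R:ℝ)*vmax)^2 = 2*(R:ℝ)*a2 := by
    have hh : ∀ r ∈ Finset.Icc 1 R, ((r:ℝ)/(R:ℝ)*vmax)^2 = (r:ℝ)^2 * (vmax^2/(R:ℝ)^2) := by
      intro r _; ring
    rw [Finset.sum_congr rfl hh, ← Finset.sum_mul, sq_sum, ha2]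
    field_simp
    ring
  refine ⟨?_, ?_, ?_⟩
  · have h1 : ∀ r ∈ Finset.Icc 1 R, ∑ s ∈ Finset.Icc 1 (4*S), M r s = 4*(S:ℝ)*u := by
      intro r _
      have hsummand : ∀ s ∈ Finset.Icc 1 (4*S), M r s =
          u + ((r:ℝ)/(R:ℝ)*vmax*Fx/a2) * Real.cos ((s:ℝ)*(π/(2*(S:ℝ))))
            + ((r:ℝ)/(R:ℝ)*vmax*Fy/a2) * Real.sin ((s:ℝ)*(π/(2*(S:ℝ)))) := by
        intro s _
        rw [hM, hθ s]
        ring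
      rw [Finset.sum_congr rfl hsummand, Finset.sum_add_distrib, Finset.sum_add_distrib,
        ← Finset.mul_sum, ← Finset.mul_sum, hc1cos, hc1sin, Finset.sum_const, hcard]
      push_cast; simp [nsmul_eq_mul]
    rw [Finset.sum_congr rfl h1, Finset.sum_const, Nat.card_Icc]
    simp only [Nat.add_sub_cancel, nsmul_eq_mul]
    field_simp
  · have h2 : ∀ r ∈ Finset.Icc 1 R, ∑ s ∈ Finset.Icc 1 (4*S),
        ((r:ℝ)/(R:ℝ)*vmax) * Real.cos ((s:ℝ)/(S:ℝ)*(π/2)) * M r s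
        = ((r:ℝ)/(R:ℝ)*vmax)^2 * ((2*(S:ℝ))*Fx/a2) := by
      intro r _
      have hsummand : ∀ s ∈ Finset.Icc 1 (4*S),
          ((r:ℝ)/(R:ℝ)*vmax) * Real.cos ((s:ℝ)/(S:ℝ)*(π/2)) * M r s =
          ((r:ℝ)/(R:ℝ)*vmax*u) * Real.cos ((s:ℝ)*(π/(2*(S:ℝ))))
          + (((r:ℝ)/(R:ℝ)*vmax)^2*Fx/a2) * Real.cos ((s:ℝ)*(π/(2*(S:ℝ))))^2
          + (((r:ℝ)/(R:ℝ)*vmax)^2*Fy/a2) *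
              (Real.cos ((s:ℝ)*(π/(2*(S:ℝ)))) * Real.sin ((s:ℝ)*(π/(2*(S:ℝ))))) := by
        intro s _
        rw [hM, hθ s]
        ring
      rw [Finset.sum_congr rfl hsummand, Finset.sum_add_distrib, Finset.sum_add_distrib,
        ← Finset.mul_sum, ← Finset.mul_sum, ← Finset.mul_sum, hc1cos, hcos2, hcs]
      ring
    rw [Finset.sum_congr rfl h2, ← Finset.sum_mul, hA]
    field_simp
    ring
  · have h3 : ∀ r ∈ Finset.Icc 1 R, ∑ s ∈ Finset.Icc 1 (4*S),
        ((r:ℝ)/(R:ℝ)*vmax) * Real.sin ((s:ℝ)/(S:ℝ)*(π/2)) * M r s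
        = ((r:ℝ)/(R:ℝ)*vmax)^2 * ((2*(S:ℝ))*Fy/a2) := by
      intro r _
      have hsummand : ∀ s ∈ Finset.Icc 1 (4*S),
          ((r:ℝ)/(R:ℝ)*vmax) * Real.sin ((s:ℝ)/(S:ℝ)*(π/2)) * M r s =
          ((r:ℝ)/(R:ℝ)*vmax*u) * Real.sin ((s:ℝ)*(π/(2*(S:ℝ))))
          + (((r:ℝ)/(R:ℝ)*vmax)^2*Fx/a2) *
              (Real.cos ((s:ℝ)*(π/(2*(S:ℝ)))) * Real.sin ((s:ℝ)*(π/(2*(S:ℝ)))))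
          + (((r:ℝ)/(R:ℝ)*vmax)^2*Fy/a2) * Real.sin ((s:ℝ)*(π/(2*(S:ℝ))))^2 := by
        intro s _
        rw [hM, hθ s]
        ring
      rw [Finset.sum_congr rfl hsummand, Finset.sum_add_distrib, Finset.sum_add_distrib,
        ← Finset.mul_sum, ← Finset.mul_sum, ← Finset.mul_sum, hc1sin, hsin2, hcs]
      ring
    rw [Finset.sum_congr rfl h3, ← Finset.sum_mul, hA]
    field_simp
    ring
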